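/- Let A₀ = e₃ ⊗ (e₁ + i e₂)ᵀ ∈ gl(3,ℂ). For every A in the orbit Orb(A₀) = {e^{iφ} R₁ A₀ R₂⁻¹ : φ ∈ ℝ, R₁, R₂ ∈ SO(3)}, the real linear subspace {(v, w) ∈ ℝ³ × ℝ³ : v̂ A + A ŵ = 0} is one-dimensional. -/
import Mathlib


open Matrix

noncomputable section

abbrev M3R : Type := Matrix (Fin 3) (Fin 3) ℝ
abbrev M3C : Type := Matrix (Fin 3) (Fin 3) ℂ

def isSO3 (R : M3R) : Prop := R * Rᵀ = 1 ∧ R.det = 1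

def toC (R : M3R) : M3C := R.map (fun x => (x : ℂ))

/-- `v̂`, the real skew-symmetric matrix with `v̂ x = v × x`. -/
def hatR (v : Fin 3 → ℝ) : M3R :=
  !![0, -v 2, v 1; v 2, 0, -v 0; -v 1, v 0, 0]

/-- `v̂` viewed as a complex matrix. -/
def hatC (v : Fin 3 → ℝ) : M3C := toC (hatR v)

/-- `A₀ = e₃ ⊗ (e₁ + i e₂)ᵀ`. -/
def A0 : M3C := !![0, 0, 0; 0, 0, 0; 1, Complex.I, 0]

/-- The orbit of `A₀` under the `U(1) × SO(3) × SO(3)` action. -/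
def OrbA0 : Set M3C :=
  {A | ∃ (φ : ℝ) (R₁ R₂ : M3R), isSO3 R₁ ∧ isSO3 R₂ ∧
    A = Complex.exp (φ * Complex.I) • (toC R₁ * A0 * (toC R₂)⁻¹)}

lemma hat_conj {R : M3R} (hR : isSO3 R) (v : Fin 3 → ℝ) :
    hatR (R *ᵥ v) = R * hatR v * Rᵀ := by
  have h1 : R⁻¹ = Rᵀ := Matrix.inv_eq_right_inv hR.1
  have h2 : R⁻¹ = R.adjugate := Matrix.inv_eq_right_inv
    (by rw [Matrix.mul_adjugate, hR.2, one_smul])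
  have hadj : Rᵀ = R.adjugate := by rw [← h1, h2]
  have key : ∀ i j, R j i = R.adjugate i j := fun i j => congrFun (congrFun hadj i) j
  have h00 : R 0 0 = R 1 1 * R 2 2 - R 1 2 * R 2 1 := by
    simpa [Matrix.adjugate_fin_three] using key 0 0
  have h10 : R 1 0 = -(R 0 1 * R 2 2) + R 0 2 * R 2 1 := by
    simpa [Matrix.adjugate_fin_three] using key 0 1
  have h20 : R 2 0 = R 0 1 * R 1 2 - R 0 2 * R 1 1 := by
    simpa [Matrix.adjugate_fin_three] using key 0 2
  have h01 : R 0 1 = -(R 1 0 * R 2 2) + R 1 2 * R 2 0 := by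
    simpa [Matrix.adjugate_fin_three] using key 1 0
  have h11 : R 1 1 = R 0 0 * R 2 2 - R 0 2 * R 2 0 := by
    simpa [Matrix.adjugate_fin_three] using key 1 1
  have h21 : R 2 1 = -(R 0 0 * R 1 2) + R 0 2 * R 1 0 := by
    simpa [Matrix.adjugate_fin_three] using key 1 2
  have h02 : R 0 2 = R 1 0 * R 2 1 - R 1 1 * R 2 0 := by
    simpa [Matrix.adjugate_fin_three] using key 2 0
  have h12 : R 1 2 = -(R 0 0 * R 2 1) + R 0 1 * R 2 0 := by
    simpa [Matrix.adjugate_fin_three] using key 2 1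
  have h22 : R 2 2 = R 0 0 * R 1 1 - R 0 1 * R 1 0 := by
    simpa [Matrix.adjugate_fin_three] using key 2 2
  ext i j
  fin_cases i <;> fin_cases j <;>
    simp [hatR, Matrix.mul_apply, Matrix.mulVec, dotProduct,
      Fin.sum_univ_three, Matrix.transpose_apply]
  · ring
  · linear_combination (-(v 0)) * h20 + (-(v 1)) * h21 + (-(v 2)) * h22
  · linear_combination v 0 * h10 + v 1 * h11 + v 2 * h12
  · linear_combination v 0 * h20 + v 1 * h21 + v 2 * h22
  · ring
  · linear_combination (-(v 0)) * h00 + (-(v 1)) * h01 + (-(v 2)) * h02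
  · linear_combination (-(v 0)) * h10 + (-(v 1)) * h11 + (-(v 2)) * h12
  · linear_combination v 0 * h00 + v 1 * h01 + v 2 * h02
  · ring

lemma toC_mul (A B : M3R) : toC (A * B) = toC A * toC B := by
  have : (fun x : ℝ => (x : ℂ)) = ⇑Complex.ofRealHom := rfl
  simp only [toC, this, Matrix.map_mul]

lemma toC_transpose (A : M3R) : toC Aᵀ = (toC A)ᵀ := rfl

lemma toC_one : toC (1 : M3R) = 1 := by
  ext i j
  simp [toC, Matrix.map_apply, Matrix.one_apply, apply_ite]

lemma core (a b : Fin 3 → ℝ) :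
    hatC a * A0 + A0 * hatC b = 0 ↔ a 0 = 0 ∧ a 1 = 0 ∧ b = 0 := by
  constructor
  · intro h
    have e10 := congrFun (congrFun h 1) 0
    have e00 := congrFun (congrFun h 0) 0
    have e21 := congrFun (congrFun h 2) 1
    have e22 := congrFun (congrFun h 2) 2
    simp [hatC, hatR, toC, A0, Matrix.mul_apply, Matrix.vecMul, dotProduct,
      Matrix.map_apply, Fin.sum_univ_three] at e10 e00 e21 e22
    have ha0 : a 0 = 0 := e10
    have ha1 : a 1 = 0 := e00
    have hb2 : b 2 = 0 := e21
    have hb0 : b 0 = 0 := by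
      have := congrArg Complex.im e22; simpa using this
    have hb1 : b 1 = 0 := by
      have := congrArg Complex.re e22; simpa using this
    exact ⟨ha0, ha1, funext fun i => by fin_cases i <;> simp [hb0, hb1, hb2]⟩
  · rintro ⟨ha0, ha1, hb⟩
    subst hb
    ext i j
    fin_cases i <;> fin_cases j <;>
      simp [hatC, hatR, toC, A0, Matrix.mul_apply, Matrix.vecMul, dotProduct,
        Matrix.map_apply, Matrix.vecHead, Matrix.vecTail, Fin.sum_univ_three, ha0, ha1]

lemma isSO3_transpose {R : M3R} (hR : isSO3 R) : isSO3 Rᵀ := by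
  refine ⟨?_, by rw [Matrix.det_transpose]; exact hR.2⟩
  rw [Matrix.transpose_transpose]
  exact mul_eq_one_comm.mp hR.1

lemma hatC_conj {R : M3R} (hR : isSO3 R) (v : Fin 3 → ℝ) :
    hatC (Rᵀ *ᵥ v) = (toC R)ᵀ * hatC v * toC R := by
  rw [hatC, hat_conj (isSO3_transpose hR), Matrix.transpose_transpose,
    toC_mul, toC_mul, toC_transpose]
  rfl

/-- For every `A` in the orbit of `A₀`, the real subspace
`{(v,w) ∈ ℝ³ × ℝ³ : v̂A + Aŵ = 0}` is one-dimensional: it is spanned by a single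
nonzero vector. -/
theorem isotropy_algebra_one_dimensional :
    ∀ A ∈ OrbA0, ∃ p : (Fin 3 → ℝ) × (Fin 3 → ℝ), p ≠ 0 ∧
      ∀ q : (Fin 3 → ℝ) × (Fin 3 → ℝ),
        (hatC q.1 * A + A * hatC q.2 = 0 ↔ ∃ t : ℝ, q = t • p) := by
  rintro A ⟨φ, R₁, R₂, h1, h2, rfl⟩
  set c : ℂ := Complex.exp (φ * Complex.I) with hc_def
  have hc : c ≠ 0 := Complex.exp_ne_zero _
  set T₁ : M3C := toC R₁ with hT1_def
  set T₂ : M3C := toC R₂ with hT2_def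
  have hT1 : T₁ * T₁ᵀ = 1 := by rw [hT1_def, ← toC_transpose, ← toC_mul, h1.1, toC_one]
  have hT2 : T₂ * T₂ᵀ = 1 := by rw [hT2_def, ← toC_transpose, ← toC_mul, h2.1, toC_one]
  have hT1' : T₁ᵀ * T₁ = 1 := mul_eq_one_comm.mp hT1
  have hT2' : T₂ᵀ * T₂ = 1 := mul_eq_one_comm.mp hT2
  have hT2inv : (toC R₂)⁻¹ = T₂ᵀ := Matrix.inv_eq_right_inv hT2
  have hR1' : R₁ᵀ * R₁ = 1 := mul_eq_one_comm.mp h1.1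
  have hR2' : R₂ᵀ * R₂ = 1 := mul_eq_one_comm.mp h2.1
  rw [hT2inv]
  -- key factorization
  have keyEq : ∀ v w : Fin 3 → ℝ,
      hatC v * (c • (T₁ * A0 * T₂ᵀ)) + (c • (T₁ * A0 * T₂ᵀ)) * hatC w
        = c • (T₁ * (hatC (R₁ᵀ *ᵥ v) * A0 + A0 * hatC (R₂ᵀ *ᵥ w)) * T₂ᵀ) := by
    intro v w
    rw [hatC_conj h1, hatC_conj h2, ← hT1_def, ← hT2_def]
    rw [Matrix.mul_smul, Matrix.smul_mul, ← smul_add]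
    congr 1
    simp only [mul_add, add_mul, ← Matrix.mul_assoc]
    congr 1
    · rw [hT1, one_mul]
    · rw [Matrix.mul_assoc (T₁ * A0 * T₂ᵀ * hatC w) T₂ T₂ᵀ, hT2, mul_one]
  have hiff : ∀ X : M3C, c • (T₁ * X * T₂ᵀ) = 0 ↔ X = 0 := by
    intro X
    constructor
    · intro h
      have h' : T₁ * X * T₂ᵀ = 0 := by
        rcases smul_eq_zero.mp h with h | h
        · exact absurd h hc
        · exact h
      calc X = T₁ᵀ * (T₁ * X * T₂ᵀ) * T₂ := by
              simp only [← Matrix.mul_assoc]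
              rw [hT1', one_mul, Matrix.mul_assoc X T₂ᵀ T₂, hT2', mul_one]
        _ = 0 := by rw [h', Matrix.mul_zero, Matrix.zero_mul]
    · rintro rfl
      simp
  refine ⟨(R₁ *ᵥ ![0, 0, 1], 0), ?_, ?_⟩
  · intro hp
    have h0 : R₁ *ᵥ ![0, 0, 1] = 0 := congrArg Prod.fst hp
    have : R₁ᵀ *ᵥ (R₁ *ᵥ ![(0:ℝ), 0, 1]) = ![0, 0, 1] := by
      rw [Matrix.mulVec_mulVec, hR1', Matrix.one_mulVec]
    rw [h0] at this
    have := congrFun this 2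
    simp at this
  · intro q
    rw [keyEq q.1 q.2, hiff, core]
    constructor
    · rintro ⟨ha0, ha1, hb⟩
      set t : ℝ := (R₁ᵀ *ᵥ q.1) 2 with ht
      refine ⟨t, ?_⟩
      have hq1 : R₁ᵀ *ᵥ q.1 = t • ![(0:ℝ), 0, 1] := by
        funext i
        fin_cases i <;> simp [ha0, ha1, ht]
      have hq1' : q.1 = t • (R₁ *ᵥ ![(0:ℝ), 0, 1]) := by
        have h5 : R₁ *ᵥ (R₁ᵀ *ᵥ q.1) = q.1 := by
          rw [Matrix.mulVec_mulVec, h1.1, Matrix.one_mulVec]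
        calc q.1 = R₁ *ᵥ (R₁ᵀ *ᵥ q.1) := h5.symm
          _ = R₁ *ᵥ (t • ![(0:ℝ), 0, 1]) := by rw [hq1]
          _ = t • (R₁ *ᵥ ![(0:ℝ), 0, 1]) := Matrix.mulVec_smul _ _ _
      have hq2 : q.2 = 0 := by
        have : R₂ *ᵥ (R₂ᵀ *ᵥ q.2) = q.2 := by
          rw [Matrix.mulVec_mulVec, h2.1, Matrix.one_mulVec]
        rw [← this, hb, Matrix.mulVec_zero]
      exact Prod.ext hq1' (by simpa using hq2)
    · rintro ⟨t, rfl⟩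
      have hfst : R₁ᵀ *ᵥ (t • (R₁ *ᵥ ![(0:ℝ), 0, 1])) = t • ![(0:ℝ), 0, 1] := by
        rw [Matrix.mulVec_smul, Matrix.mulVec_mulVec, hR1', Matrix.one_mulVec]
      refine ⟨?_, ?_, ?_⟩
      · show (R₁ᵀ *ᵥ (t • (R₁ *ᵥ ![(0:ℝ), 0, 1], (0 : Fin 3 → ℝ)).1)) 0 = 0
        simp only [Prod.smul_fst] at *
        rw [hfst]; simp
      · show (R₁ᵀ *ᵥ (t • (R₁ *ᵥ ![(0:ℝ), 0, 1], (0 : Fin 3 → ℝ)).1)) 1 = 0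
        simp only [Prod.smul_fst] at *
        rw [hfst]; simp
      · show R₂ᵀ *ᵥ (t • (R₁ *ᵥ ![(0:ℝ), 0, 1], (0 : Fin 3 → ℝ)).2) = 0
        simp
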